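/- Let (X,ρ) be a compact metric space, f : X → X continuous, x ∈ X, ε > 0, and m, n ∈ ℕ. Then C^f_m(x, n, ε) ≥ 1/r_m(ε/2, X), where r_m(ε/2, X) is the smallest cardinality of an (m, ε/2)-spanning subset of X. -/

import Mathlib

open Filter Topology Set MeasureTheory

section Defs

variable {X : Type*} [MetricSpace X]

/-- Bowen's metric `ρ^f_m(y,z) = max_{0 ≤ i < m} ρ(f^i y, f^i z)`. -/
noncomputable def bowenDist (f : X → X) (m : ℕ) (y z : X) : ℝ :=
  (((Finset.range m).sup fun i => nndist (f^[i] y) (f^[i] z)) : NNReal)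

open scoped Classical in
/-- The correlation sum `C^f_m(x,n,ε)`. -/
noncomputable def corrSum (f : X → X) (m : ℕ) (x : X) (n : ℕ) (ε : ℝ) : ℝ :=
  (((Finset.range n ×ˢ Finset.range n).filter fun q =>
      bowenDist f m (f^[q.1] x) (f^[q.2] x) ≤ ε).card : ℝ) / (n : ℝ) ^ 2

/-- `ĉ^f_m(x,ε) = limsup_{n→∞} C^f_m(x,n,ε)`. -/
noncomputable def corrUpper (f : X → X) (m : ℕ) (x : X) (ε : ℝ) : ℝ :=
  Filter.limsup (fun n : ℕ => corrSum f m x n ε) Filter.atTop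

/-- `č^f_m(x,ε) = liminf_{n→∞} C^f_m(x,n,ε)`. -/
noncomputable def corrLower (f : X → X) (m : ℕ) (x : X) (ε : ℝ) : ℝ :=
  Filter.liminf (fun n : ℕ => corrSum f m x n ε) Filter.atTop

/-- The upper local correlation entropy `entr⁺(f,x) = lim_{ε→0⁺} limsup_m (−1/m) log č^f_m(x,ε)`;
the limit as `ε → 0⁺` exists by monotonicity in `ε`, and is expressed here as a `limsup`
along `𝓝[>] 0` (with values in `EReal`). -/
noncomputable def entrUpper (f : X → X) (x : X) : EReal :=
  Filter.limsup (fun ε : ℝ =>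
      Filter.limsup (fun m : ℕ => ((-(1 / (m : ℝ)) * Real.log (corrLower f m x ε) : ℝ) : EReal))
        Filter.atTop)
    (𝓝[>] (0 : ℝ))

/-- The lower local correlation entropy `entr⁻(f,x) = lim_{ε→0⁺} liminf_m (−1/m) log ĉ^f_m(x,ε)`. -/
noncomputable def entrLower (f : X → X) (x : X) : EReal :=
  Filter.limsup (fun ε : ℝ =>
      Filter.liminf (fun m : ℕ => ((-(1 / (m : ℝ)) * Real.log (corrUpper f m x ε) : ℝ) : EReal))
        Filter.atTop)
    (𝓝[>] (0 : ℝ))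

/-- `r_m(ε,K)`: the smallest cardinality of a subset of `K` which `(m,ε)`-spans `K`. -/
noncomputable def spanNumOn (f : X → X) (K : Set X) (m : ℕ) (ε : ℝ) : ℕ :=
  sInf {k : ℕ | ∃ A : Finset X, ↑A ⊆ K ∧ A.card = k ∧ ∀ y ∈ K, ∃ a ∈ A, bowenDist f m y a ≤ ε}

/-- Bowen's topological entropy of `f` on `K` (for `K = univ`, of `f` itself;
for closed invariant `K`, of the restriction of `f` to `K`). -/
noncomputable def topEntropyOn (f : X → X) (K : Set X) : EReal :=
  Filter.limsup (fun ε : ℝ =>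
      Filter.limsup (fun n : ℕ => (((1 / (n : ℝ)) * Real.log (spanNumOn f K n ε) : ℝ) : EReal))
        Filter.atTop)
    (𝓝[>] (0 : ℝ))

end Defs

/-!
Assign to each orbit point `f^[i] x`, `i < n`, a centre of an optimal `(m, ε/2)`-spanning set `A`.
Two orbit points with the same centre are `ε`-close in Bowen's metric, so the pairs counted by the
correlation sum contain the pairs lying in a common fibre of this assignment; by Cauchy–Schwarz
there are at least `n² / #A` of those.
-/

open Finset in
theorem sq_card_le_card_mul_card_collisions {ι α : Type*} [DecidableEq α] (s : Finset ι)
    (A : Finset α) (g : ι → α) (hg : Set.MapsTo g s A) :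
    #s ^ 2 ≤ #A * #{q ∈ s ×ˢ s | g q.1 = g q.2} := by
  set fiber : α → Finset ι := fun a => {i ∈ s | g i = a}
  have hfiber : ∀ a, {q ∈ {q ∈ s ×ˢ s | g q.1 = g q.2} | g q.1 = a} = fiber a ×ˢ fiber a := by
    intro a; ext q; simp only [fiber, mem_filter, mem_product]; grind
  have hcoll : #{q ∈ s ×ˢ s | g q.1 = g q.2} = ∑ a ∈ A, #(fiber a) ^ 2 := by
    have hmaps : Set.MapsTo (fun q : ι × ι => g q.1)
        ↑({q ∈ s ×ˢ s | g q.1 = g q.2} : Finset (ι × ι)) A :=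
      fun q hq => hg (mem_product.1 (mem_filter.1 hq).1).1
    simp only [card_eq_sum_card_fiberwise hmaps, hfiber, card_product, sq]
  rw [card_eq_sum_card_fiberwise hg, hcoll]
  exact sq_sum_le_card_mul_sum_sq

section Bowen

variable {X : Type*} [MetricSpace X] (f : X → X) (m : ℕ)

theorem bowenDist_comm (y z : X) : bowenDist f m y z = bowenDist f m z y := by
  simp only [bowenDist, nndist_comm]

theorem bowenDist_triangle (y z a : X) :
    bowenDist f m y z ≤ bowenDist f m y a + bowenDist f m a z := by
  rw [bowenDist, bowenDist, bowenDist, ← NNReal.coe_add, NNReal.coe_le_coe]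
  refine Finset.sup_le fun i hi => (nndist_triangle _ (f^[i] a) _).trans ?_
  exact add_le_add (Finset.le_sup (f := fun i => nndist (f^[i] y) (f^[i] a)) hi)
    (Finset.le_sup (f := fun i => nndist (f^[i] a) (f^[i] z)) hi)

theorem corrSum_nonneg (x : X) (n : ℕ) (ε : ℝ) : 0 ≤ corrSum f m x n ε := by
  unfold corrSum
  positivity

open Finset in
theorem one_div_card_le_corrSum {x : X} {n : ℕ} {ε : ℝ} (hn : 0 < n) (A : Finset X)
    (hA : ∀ i, ∃ a ∈ A, bowenDist f m (f^[i] x) a ≤ ε / 2) :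
    1 / (#A : ℝ) ≤ corrSum f m x n ε := by
  classical
  choose g hgA hg using hA
  have hcoll : {q ∈ range n ×ˢ range n | g q.1 = g q.2} ⊆
      {q ∈ range n ×ˢ range n | bowenDist f m (f^[q.1] x) (f^[q.2] x) ≤ ε} := by
    refine monotone_filter_right _ fun q _ hq => ?_
    calc bowenDist f m (f^[q.1] x) (f^[q.2] x)
        ≤ bowenDist f m (f^[q.1] x) (g q.1) + bowenDist f m (g q.2) (f^[q.2] x) := by
          rw [← hq]; exact bowenDist_triangle f m _ _ _
      _ ≤ ε / 2 + ε / 2 := by rw [bowenDist_comm f m (g q.2)]; exact add_le_add (hg _) (hg _)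
      _ = ε := add_halves ε
  have hcount := (sq_card_le_card_mul_card_collisions (range n) A g fun i _ => hgA i).trans
    (Nat.mul_le_mul_left #A (card_le_card hcoll))
  rw [card_range] at hcount
  have hA : (0 : ℝ) < #A := Nat.cast_pos.2 (card_pos.2 ⟨g 0, hgA 0⟩)
  rw [corrSum, div_le_div_iff₀ hA (by positivity), one_mul, mul_comm]
  exact_mod_cast hcount

open Finset in
theorem exists_finset_card_eq_spanNumOn {K : Set X} {ε : ℝ} (h : 0 < spanNumOn f K m ε) :
    ∃ A : Finset X, ↑A ⊆ K ∧ #A = spanNumOn f K m ε ∧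
      ∀ y ∈ K, ∃ a ∈ A, bowenDist f m y a ≤ ε :=
  Nat.sInf_mem (Nat.nonempty_of_pos_sInf h)

end Bowen

theorem corrSum_ge_inv_spanNum_general {X : Type*} [MetricSpace X]
    (f : X → X) (x : X) (ε : ℝ) (m n : ℕ)
    (hn : 0 < n) :
    1 / (spanNumOn f Set.univ m (ε / 2) : ℝ) ≤ corrSum f m x n ε := by
  rcases (spanNumOn f Set.univ m (ε / 2)).eq_zero_or_pos with h0 | hpos
  · -- `spanNumOn = sInf ∅ = 0` when no finite spanning set exists, and then `1 / 0 = 0`.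
    rw [h0, Nat.cast_zero, div_zero]
    exact corrSum_nonneg f m x n ε
  · obtain ⟨A, -, hcard, hspan⟩ := exists_finset_card_eq_spanNumOn f m hpos
    rw [← hcard]
    exact one_div_card_le_corrSum f m hn A fun i => hspan _ (Set.mem_univ _)

/-- `C^f_m(x,n,ε) ≥ 1/r_m(ε/2,X)`. -/
theorem corrSum_ge_inv_spanNum {X : Type*} [MetricSpace X] [CompactSpace X]
    (f : X → X) (hf : Continuous f) (x : X) (ε : ℝ) (hε : 0 < ε) (m n : ℕ)
    (hm : 0 < m) (hn : 0 < n) :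
    1 / (spanNumOn f Set.univ m (ε / 2) : ℝ) ≤ corrSum f m x n ε :=
  corrSum_ge_inv_spanNum_general f x ε m n hn
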